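/- arXiv:1903.02245 — 10 statements merged into one kernel-verified Lean document; each statement's English description precedes it below -/
import Mathlib

section
/- Let H : ℝ → ℝ be smooth with H'' nonvanishing, and define P by H''(x) = exp(∫ (2/3) P(x) dx), i.e. P = (3/2) H'''/H''. Then H satisfies Noth's equation 10(H'')³H⁽⁶⁾ − 70(H'')²H⁽³⁾H⁽⁵⁾ − 49(H'')²(H⁽⁴⁾)² + 280 H''(H⁽³⁾)²H⁽⁴⁾ − 175(H⁽³⁾)⁴ = 0 if and only if P satisfies the generalised Chazy equation with parameter k = 3/2: P''' − 2PP'' + 3(P')² − (4/(36 − 9/4))(6P' − P²)² = 0. -/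
/-- First derivative of `P = (3/2) H'''/H''` in terms of derivatives of `H`. -/
noncomputable def nothQ1 (H : ℝ → ℝ) (x : ℝ) : ℝ :=
  (3/2 * deriv^[4] H x * deriv^[2] H x - 3/2 * deriv^[3] H x * deriv^[3] H x)
    / (deriv^[2] H x)^2

/-- Second derivative of `P` in terms of derivatives of `H`. -/
noncomputable def nothQ2 (H : ℝ → ℝ) (x : ℝ) : ℝ :=
  (3 * (deriv^[3] H x)^3 - 9/2 * deriv^[2] H x * deriv^[3] H x * deriv^[4] H x
      + 3/2 * (deriv^[2] H x)^2 * deriv^[5] H x) / (deriv^[2] H x)^3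

/-- Third derivative of `P` in terms of derivatives of `H`. -/
noncomputable def nothQ3 (H : ℝ → ℝ) (x : ℝ) : ℝ :=
  (-9 * (deriv^[3] H x)^4 + 18 * deriv^[2] H x * (deriv^[3] H x)^2 * deriv^[4] H x
      - 9/2 * (deriv^[2] H x)^2 * (deriv^[4] H x)^2
      - 6 * (deriv^[2] H x)^2 * deriv^[3] H x * deriv^[5] H x
      + 3/2 * (deriv^[2] H x)^3 * deriv^[6] H x) / (deriv^[2] H x)^4

/-- Noth's equation for `H` is equivalent to the generalised Chazy equation with
parameter `k = 3/2` for `P = (3/2) H'''/H''`. -/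
theorem stmt0 (H P : ℝ → ℝ) (hH : ContDiff ℝ (⊤ : ℕ∞) H)
    (hH2 : ∀ x, deriv^[2] H x ≠ 0)
    (hP : ∀ x, P x = (3/2) * deriv^[3] H x / deriv^[2] H x) :
    (∀ x, 10 * (deriv^[2] H x)^3 * deriv^[6] H x
        - 70 * (deriv^[2] H x)^2 * deriv^[3] H x * deriv^[5] H x
        - 49 * (deriv^[2] H x)^2 * (deriv^[4] H x)^2
        + 280 * deriv^[2] H x * (deriv^[3] H x)^2 * deriv^[4] H x
        - 175 * (deriv^[3] H x)^4 = 0)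
    ↔ (∀ x, deriv^[3] P x - 2 * P x * deriv^[2] P x + 3 * (deriv P x)^2
        - (4 / (36 - (3/2 : ℝ)^2)) * (6 * deriv P x - (P x)^2)^2 = 0) := by
  have hH' : ContDiff ℝ ((⊤ : ℕ∞) : WithTop ℕ∞) H := hH.of_le (by simp)
  have hD : ∀ (n : ℕ) (x : ℝ), HasDerivAt (deriv^[n] H) (deriv^[n+1] H x) x := by
    intro n x
    have hd : Differentiable ℝ (deriv^[n] H) :=
      (hH'.iterate_deriv n).differentiable (by simp)
    have h := (hd x).hasDerivAt
    rwa [show deriv^[n+1] H = deriv (deriv^[n] H) from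
      Function.iterate_succ_apply' deriv n H]
  have hPfun : P = fun x => (3/2) * deriv^[3] H x / deriv^[2] H x := funext hP
  have hQ1 : ∀ x, HasDerivAt P (nothQ1 H x) x := by
    intro x
    rw [hPfun]
    have h := (((hD 3 x).const_mul (3/2 : ℝ)).div (hD 2 x) (hH2 x))
    have h' : HasDerivAt (fun x => (3/2) * deriv^[3] H x / deriv^[2] H x) _ x := h
    convert h' using 1
    rfl
  have hdP : deriv P = nothQ1 H := funext fun x => (hQ1 x).deriv
  have hQ2 : ∀ x, HasDerivAt (nothQ1 H) (nothQ2 H x) x := by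
    intro x
    have h := ((((hD 4 x).const_mul (3/2 : ℝ)).mul (hD 2 x)).sub
        (((hD 3 x).const_mul (3/2 : ℝ)).mul (hD 3 x))).div
        ((hD 2 x).pow 2) (pow_ne_zero 2 (hH2 x))
    have h2 := hH2 x
    have h' : HasDerivAt (nothQ1 H) _ x := h
    convert h' using 1
    simp only [Pi.mul_apply, Pi.sub_apply, Pi.add_apply, Pi.pow_apply, Nat.cast_ofNat]
    rw [nothQ2, div_eq_div_iff (pow_ne_zero 3 h2) (pow_ne_zero 2 (pow_ne_zero 2 h2))]
    ring
  have hd2P : deriv^[2] P = nothQ2 H := by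
    funext x
    have e2 : deriv^[2] P = deriv (deriv P) := by
      rw [Function.iterate_succ_apply', Function.iterate_one]
    rw [e2, hdP]
    exact (hQ2 x).deriv
  have hQ3 : ∀ x, HasDerivAt (nothQ2 H) (nothQ3 H x) x := by
    intro x
    have h := (((((hD 3 x).pow 3).const_mul (3 : ℝ)).sub
        ((((hD 2 x).const_mul (9/2 : ℝ)).mul (hD 3 x)).mul (hD 4 x))).add
        ((((hD 2 x).pow 2).const_mul (3/2 : ℝ)).mul (hD 5 x))).div
        ((hD 2 x).pow 3) (pow_ne_zero 3 (hH2 x))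
    have h2 := hH2 x
    have h' : HasDerivAt (nothQ2 H) _ x := h
    convert h' using 1
    simp only [Pi.mul_apply, Pi.sub_apply, Pi.add_apply, Pi.pow_apply, Nat.cast_ofNat]
    rw [nothQ3, div_eq_div_iff (pow_ne_zero 4 h2) (pow_ne_zero 2 (pow_ne_zero 3 h2))]
    ring
  have hd3P : ∀ x, deriv^[3] P x = nothQ3 H x := by
    intro x
    have e3 : deriv^[3] P = deriv (deriv^[2] P) := Function.iterate_succ_apply' deriv 2 P
    rw [e3, hd2P]
    exact (hQ3 x).deriv
  have key : ∀ x, deriv^[3] P x - 2 * P x * deriv^[2] P x + 3 * (deriv P x)^2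
      - (4 / (36 - (3/2 : ℝ)^2)) * (6 * deriv P x - (P x)^2)^2
      = (3/20) * (10 * (deriv^[2] H x)^3 * deriv^[6] H x
        - 70 * (deriv^[2] H x)^2 * deriv^[3] H x * deriv^[5] H x
        - 49 * (deriv^[2] H x)^2 * (deriv^[4] H x)^2
        + 280 * deriv^[2] H x * (deriv^[3] H x)^2 * deriv^[4] H x
        - 175 * (deriv^[3] H x)^4) / (deriv^[2] H x)^4 := by
    intro x
    have h2 := hH2 x
    rw [hd3P x, hd2P, hdP, hP x]
    simp only [nothQ1, nothQ2, nothQ3]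
    field_simp
    ring
  constructor
  · intro h x
    rw [key x, h x]
    simp
  · intro h x
    have hx := h x
    rw [key x] at hx
    have h4 : (deriv^[2] H x)^4 ≠ 0 := pow_ne_zero 4 (hH2 x)
    have hN := (div_eq_zero_iff.mp hx).resolve_right h4
    linarith
end

section
/- Let F : ℝ → ℝ be smooth with F'' nonvanishing, and define P = 2·F'''/F'' (so that F'' = exp(∫ (1/2) P dx)). Then F satisfies the 6th-order ODE 10(F'')³F⁽⁶⁾ − 80(F'')²F⁽³⁾F⁽⁵⁾ − 51(F'')²(F⁽⁴⁾)² + 336 F''(F⁽³⁾)²F⁽⁴⁾ − 224(F⁽³⁾)⁴ = 0 if and only if P satisfies the generalised Chazy equation with parameter k = 2/3: P''' − 2PP'' + 3(P')² − (4/(36 − 4/9))(6P' − P²)² = 0. -/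
/-- The dual 6th-order ODE for `F` is equivalent to the generalised Chazy equation with
parameter `k = 2/3` for `P = 2 F'''/F''`. -/
theorem stmt1 (F P : ℝ → ℝ) (hF : ContDiff ℝ (⊤ : ℕ∞) F)
    (hF2 : ∀ x, deriv^[2] F x ≠ 0)
    (hP : ∀ x, P x = 2 * deriv^[3] F x / deriv^[2] F x) :
    (∀ x, 10 * (deriv^[2] F x)^3 * deriv^[6] F x
        - 80 * (deriv^[2] F x)^2 * deriv^[3] F x * deriv^[5] F x
        - 51 * (deriv^[2] F x)^2 * (deriv^[4] F x)^2
        + 336 * deriv^[2] F x * (deriv^[3] F x)^2 * deriv^[4] F x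
        - 224 * (deriv^[3] F x)^4 = 0)
    ↔ (∀ x, deriv^[3] P x - 2 * P x * deriv^[2] P x + 3 * (deriv P x)^2
        - (4 / (36 - (2/3 : ℝ)^2)) * (6 * deriv P x - (P x)^2)^2 = 0) := by
  have hF' : ContDiff ℝ (⊤ : ℕ∞) F := hF.of_le (by simp)
  have hd : ∀ n : ℕ, Differentiable ℝ (deriv^[n] F) := fun n =>
    (hF'.iterate_deriv n).differentiable (by simp)
  have hD : ∀ (n : ℕ) (x : ℝ), HasDerivAt (deriv^[n] F) (deriv^[n+1] F x) x := by
    intro n x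
    have h := ((hd n) x).hasDerivAt
    simpa [Function.iterate_succ_apply'] using h
  set f2 := deriv^[2] F with hf2
  set f3 := deriv^[3] F with hf3
  set f4 := deriv^[4] F with hf4
  set f5 := deriv^[5] F with hf5
  set f6 := deriv^[6] F with hf6
  have hD2 : ∀ x, HasDerivAt f2 (f3 x) x := fun x => hD 2 x
  have hD3 : ∀ x, HasDerivAt f3 (f4 x) x := fun x => hD 3 x
  have hD4 : ∀ x, HasDerivAt f4 (f5 x) x := fun x => hD 4 x
  have hD5 : ∀ x, HasDerivAt f5 (f6 x) x := fun x => hD 5 x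
  have hPf : P = fun x => 2 * f3 x / f2 x := funext hP
  -- first derivative of P
  have hP1 : ∀ x, HasDerivAt P ((2 * f4 x * f2 x - 2 * (f3 x)^2) / (f2 x)^2) x := by
    intro x
    have h := ((hD3 x).const_mul 2).div (hD2 x) (hF2 x)
    rw [hPf]
    refine h.congr_deriv ?_
    rw [div_eq_div_iff (pow_ne_zero 2 (hF2 x)) (pow_ne_zero 2 (hF2 x))]
    ring
  have e1 : ∀ x, deriv P x = (2 * f4 x * f2 x - 2 * (f3 x)^2) / (f2 x)^2 :=
    fun x => (hP1 x).deriv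
  have e1f : deriv P = fun x => (2 * f4 x * f2 x - 2 * (f3 x)^2) / (f2 x)^2 := funext e1
  -- second derivative
  have hP2 : ∀ x, HasDerivAt (deriv P)
      ((2 * f5 x * (f2 x)^2 - 6 * f3 x * f4 x * f2 x + 4 * (f3 x)^3) / (f2 x)^3) x := by
    intro x
    have hnum : HasDerivAt (fun y => 2 * f4 y * f2 y - 2 * (f3 y)^2)
        ((2 * f5 x * f2 x + 2 * f4 x * f3 x) - 2 * (2 * (f3 x)^(2-1) * f4 x)) x :=
      (((hD4 x).const_mul 2).mul (hD2 x)).sub (((hD3 x).pow 2).const_mul 2)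
    have hden : HasDerivAt (fun y => (f2 y)^2) (2 * (f2 x)^(2-1) * f3 x) x := (hD2 x).pow 2
    have h := hnum.div hden (pow_ne_zero 2 (hF2 x))
    rw [e1f]
    refine h.congr_deriv ?_
    rw [div_eq_div_iff (pow_ne_zero 2 (pow_ne_zero 2 (hF2 x))) (pow_ne_zero 3 (hF2 x))]
    ring
  have e2 : ∀ x, deriv^[2] P x
      = (2 * f5 x * (f2 x)^2 - 6 * f3 x * f4 x * f2 x + 4 * (f3 x)^3) / (f2 x)^3 := by
    intro x
    have h2 : deriv^[2] P x = deriv (deriv P) x := by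
      rw [Function.iterate_succ_apply', Function.iterate_one]
    rw [h2]
    exact (hP2 x).deriv
  have e2f : deriv^[2] P = fun x =>
      (2 * f5 x * (f2 x)^2 - 6 * f3 x * f4 x * f2 x + 4 * (f3 x)^3) / (f2 x)^3 :=
    funext e2
  -- third derivative
  have e3 : ∀ x, deriv^[3] P x
      = (2 * f6 x * (f2 x)^3 - 8 * f3 x * f5 x * (f2 x)^2 - 6 * (f4 x)^2 * (f2 x)^2
          + 24 * (f3 x)^2 * f4 x * f2 x - 12 * (f3 x)^4) / (f2 x)^4 := by
    intro x
    have hnum : HasDerivAt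
        (fun y => 2 * f5 y * (f2 y)^2 - 6 * f3 y * f4 y * f2 y + 4 * (f3 y)^3)
        (((2 * f6 x * (f2 x)^2 + 2 * f5 x * (2 * (f2 x)^(2-1) * f3 x))
          - ((6 * f4 x * f4 x + 6 * f3 x * f5 x) * f2 x + 6 * f3 x * f4 x * f3 x))
          + 4 * (3 * (f3 x)^(3-1) * f4 x)) x :=
      ((((hD5 x).const_mul 2).mul ((hD2 x).pow 2)).sub
        ((((hD3 x).const_mul 6).mul (hD4 x)).mul (hD2 x))).add
        (((hD3 x).pow 3).const_mul 4)
    have hden : HasDerivAt (fun y => (f2 y)^3) (3 * (f2 x)^(3-1) * f3 x) x := (hD2 x).pow 3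
    have h := hnum.div hden (pow_ne_zero 3 (hF2 x))
    have h3 : deriv^[3] P x = deriv (deriv^[2] P) x := by
      rw [Function.iterate_succ_apply']
    rw [h3, e2f, (show deriv (fun y => (2 * f5 y * (f2 y)^2 - 6 * f3 y * f4 y * f2 y + 4 * (f3 y)^3) / (f2 y)^3) x = _ from h.deriv),
      div_eq_div_iff (pow_ne_zero 2 (pow_ne_zero 3 (hF2 x))) (pow_ne_zero 4 (hF2 x))]
    ring
  -- the key algebraic identity
  have key : ∀ x, deriv^[3] P x - 2 * P x * deriv^[2] P x + 3 * (deriv P x)^2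
      - (4 / (36 - (2/3 : ℝ)^2)) * (6 * deriv P x - (P x)^2)^2
      = (10 * (f2 x)^3 * f6 x - 80 * (f2 x)^2 * f3 x * f5 x
          - 51 * (f2 x)^2 * (f4 x)^2 + 336 * f2 x * (f3 x)^2 * f4 x
          - 224 * (f3 x)^4) / (5 * (f2 x)^4) := by
    intro x
    rw [hP x, e1 x, e2 x, e3 x]
    have h2 := hF2 x
    field_simp
    ring
  constructor
  · intro h x
    rw [key x, h x, zero_div]
  · intro h x
    have hx := h x
    rw [key x] at hx
    have h5 : (5 : ℝ) * (f2 x)^4 ≠ 0 :=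
      mul_ne_zero (by norm_num) (pow_ne_zero 4 (hF2 x))
    exact (div_eq_zero_iff.mp hx).resolve_right h5
end

section
/- Let P, Q, Ω, ρ : ℝ → ℝ be smooth with Ω nonvanishing, Q = P² − 6P', and Ω = (1/ρ)·exp(−(1/3)∫ P dx) with ρ nonvanishing. Then Ω satisfies Ω''Ω − 2(Ω')² − (2/3)PΩΩ' − (1/18)P²Ω² − (1/30)QΩ² = 0 if and only if ρ satisfies ρ'' − (1/45)Qρ = 0. -/
/-- The Ricci-flatness equation for `Ω = ρ⁻¹ exp(-(1/3)∫P)` is equivalent to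
`ρ'' - (1/45) Q ρ = 0` where `Q = P² - 6P'`. -/
theorem stmt2 (P Q Ω ρ A : ℝ → ℝ)
    (hPsm : ContDiff ℝ (⊤ : ℕ∞) P) (hΩsm : ContDiff ℝ (⊤ : ℕ∞) Ω) (hρsm : ContDiff ℝ (⊤ : ℕ∞) ρ)
    (hAsm : ContDiff ℝ (⊤ : ℕ∞) A)
    (hΩ0 : ∀ x, Ω x ≠ 0) (hρ0 : ∀ x, ρ x ≠ 0)
    (hQ : ∀ x, Q x = (P x)^2 - 6 * deriv P x)
    (hA : ∀ x, deriv A x = P x)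
    (hsub : ∀ x, Ω x = (ρ x)⁻¹ * Real.exp (-(1/3) * A x)) :
    (∀ x, deriv^[2] Ω x * Ω x - 2 * (deriv Ω x)^2 - (2/3) * P x * Ω x * deriv Ω x
        - (1/18) * (P x)^2 * (Ω x)^2 - (1/30) * Q x * (Ω x)^2 = 0)
    ↔ (∀ x, deriv^[2] ρ x - (1/45) * Q x * ρ x = 0) := by
  have hρd := hρsm.differentiable (by simp)
  have hrhoInf : ContDiff ℝ (⊤ : ℕ∞) ρ := hρsm.of_le (by simp)
  have hρ'sm : ContDiff ℝ (⊤ : ℕ∞) (deriv ρ) := (contDiff_infty_iff_deriv.mp hrhoInf).2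
  have hρ'd : Differentiable ℝ (deriv ρ) := hρ'sm.differentiable (by simp)
  have hPd := hPsm.differentiable (by simp)
  have hAd := hAsm.differentiable (by simp)
  have hA' : ∀ x, HasDerivAt A (P x) x := fun x => hA x ▸ (hAd x).hasDerivAt
  have hρ' : ∀ x, HasDerivAt ρ (deriv ρ x) x := fun x => (hρd x).hasDerivAt
  have hρ'' : ∀ x, HasDerivAt (deriv ρ) (deriv^[2] ρ x) x := fun x => by
    simpa [Function.iterate_succ', Function.comp] using (hρ'd x).hasDerivAt
  have hP' : ∀ x, HasDerivAt P (deriv P x) x := fun x => (hPd x).hasDerivAt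
  have hE : ∀ x, HasDerivAt (fun x => Real.exp (-(1/3) * A x))
      (Real.exp (-(1/3) * A x) * (-(1/3) * P x)) x :=
    fun x => ((hA' x).const_mul (-(1/3))).exp
  have hΩfun : Ω = fun x => (ρ x)⁻¹ * Real.exp (-(1/3) * A x) := funext hsub
  have hΩ'at : ∀ x, HasDerivAt Ω
      (-(deriv ρ x) / (ρ x)^2 * Real.exp (-(1/3) * A x)
        + (ρ x)⁻¹ * (Real.exp (-(1/3) * A x) * (-(1/3) * P x))) x := by
    intro x
    rw [hΩfun]
    exact ((hρ' x).inv (hρ0 x)).mul (hE x)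
  have hdΩ : deriv Ω = fun x =>
      -(deriv ρ x) / (ρ x)^2 * Real.exp (-(1/3) * A x)
        + (ρ x)⁻¹ * (Real.exp (-(1/3) * A x) * (-(1/3) * P x)) :=
    funext fun x => (hΩ'at x).deriv
  have hΩ''at : ∀ x, deriv^[2] Ω x =
      ((-(deriv^[2] ρ x) * (ρ x)^2 - (-(deriv ρ x)) * (2 * ρ x ^ 1 * deriv ρ x))
          / ((ρ x)^2)^2) * Real.exp (-(1/3) * A x)
        + (-(deriv ρ x) / (ρ x)^2) * (Real.exp (-(1/3) * A x) * (-(1/3) * P x))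
        + ((-(deriv ρ x) / (ρ x)^2) * (Real.exp (-(1/3) * A x) * (-(1/3) * P x))
          + (ρ x)⁻¹ * ((Real.exp (-(1/3) * A x) * (-(1/3) * P x)) * (-(1/3) * P x)
            + Real.exp (-(1/3) * A x) * (-(1/3) * deriv P x))) := by
    intro x
    have h1 : HasDerivAt (fun x => -(deriv ρ x) / (ρ x)^2)
        ((-(deriv^[2] ρ x) * (ρ x)^2 - (-(deriv ρ x)) * (2 * ρ x ^ 1 * deriv ρ x))
          / ((ρ x)^2)^2) x :=
      (hρ'' x).neg.div ((hρ' x).pow 2) (pow_ne_zero 2 (hρ0 x))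
    have h2 : HasDerivAt (fun x => -(1/3) * P x) (-(1/3) * deriv P x) x :=
      (hP' x).const_mul (-(1/3))
    have h3 : HasDerivAt (fun x => Real.exp (-(1/3) * A x) * (-(1/3) * P x))
        ((Real.exp (-(1/3) * A x) * (-(1/3) * P x)) * (-(1/3) * P x)
          + Real.exp (-(1/3) * A x) * (-(1/3) * deriv P x)) x :=
      (hE x).mul h2
    have h4 := ((h1.mul (hE x)).add (((hρ' x).inv (hρ0 x)).mul h3))
    have : deriv^[2] Ω x = deriv (deriv Ω) x := by
      simp [Function.iterate_succ', Function.comp]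
    rw [this, hdΩ]
    exact h4.deriv
  have key : ∀ x, deriv^[2] Ω x * Ω x - 2 * (deriv Ω x)^2
      - (2/3) * P x * Ω x * deriv Ω x - (1/18) * (P x)^2 * (Ω x)^2
      - (1/30) * Q x * (Ω x)^2
      = -((Ω x)^2 / ρ x) * (deriv^[2] ρ x - (1/45) * Q x * ρ x) := by
    intro x
    rw [hΩ''at x, hdΩ, hsub x, hQ x]
    have he : Real.exp (-(1/3) * A x) ≠ 0 := Real.exp_ne_zero _
    have hr := hρ0 x
    field_simp
    ring
  constructor
  · intro h x
    have h1 := (key x) ▸ (h x)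
    have h2 : -((Ω x)^2 / ρ x) ≠ 0 := by
      simp only [neg_ne_zero]
      exact div_ne_zero (pow_ne_zero 2 (hΩ0 x)) (hρ0 x)
    exact (mul_eq_zero.mp h1).resolve_left h2
  · intro h x
    rw [key x, h x, mul_zero]
end

section
/- Let w₁, w₂, w₃ : ℝ → ℝ satisfy the first-order system w₁' = w₂w₃ − w₁(w₂+w₃) + τ², w₂' = w₃w₁ − w₂(w₃+w₁) + τ², w₃' = w₁w₂ − w₃(w₁+w₂) + τ² (for any smooth τ²), with w₂ ≠ w₃ everywhere. Then s := (w₁ − w₃)/(w₂ − w₃) satisfies s' = 2(w₁ − w₂)s. -/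
/-- For the w-system (with arbitrary smooth τ²), `s = (w₁ - w₃)/(w₂ - w₃)` satisfies
`s' = 2(w₁ - w₂)s`. -/
theorem stmt7 (w₁ w₂ w₃ τsq s : ℝ → ℝ)
    (hw₁sm : ContDiff ℝ (⊤ : ℕ∞) w₁) (hw₂sm : ContDiff ℝ (⊤ : ℕ∞) w₂) (hw₃sm : ContDiff ℝ (⊤ : ℕ∞) w₃)
    (hτsm : ContDiff ℝ (⊤ : ℕ∞) τsq)
    (hne : ∀ x, w₂ x ≠ w₃ x)
    (hw1 : ∀ x, deriv w₁ x = w₂ x * w₃ x - w₁ x * (w₂ x + w₃ x) + τsq x)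
    (hw2 : ∀ x, deriv w₂ x = w₃ x * w₁ x - w₂ x * (w₃ x + w₁ x) + τsq x)
    (hw3 : ∀ x, deriv w₃ x = w₁ x * w₂ x - w₃ x * (w₁ x + w₂ x) + τsq x)
    (hs : ∀ x, s x = (w₁ x - w₃ x) / (w₂ x - w₃ x)) :
    ∀ x, deriv s x = 2 * (w₁ x - w₂ x) * s x := by
  intro x
  have d1 : DifferentiableAt ℝ w₁ x := (hw₁sm.differentiable (by simp)).differentiableAt
  have d2 : DifferentiableAt ℝ w₂ x := (hw₂sm.differentiable (by simp)).differentiableAt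
  have d3 : DifferentiableAt ℝ w₃ x := (hw₃sm.differentiable (by simp)).differentiableAt
  have hden : w₂ x - w₃ x ≠ 0 := sub_ne_zero.mpr (hne x)
  have hkey : deriv s x =
      (deriv (fun y => w₁ y - w₃ y) x * (w₂ x - w₃ x)
        - (w₁ x - w₃ x) * deriv (fun y => w₂ y - w₃ y) x) / (w₂ x - w₃ x) ^ 2 := by
    have hseq : s = fun y => (w₁ y - w₃ y) / (w₂ y - w₃ y) := funext hs
    rw [hseq]
    exact deriv_div (d1.sub d3) (d2.sub d3) hden
  rw [hkey, deriv_fun_sub d1 d3, deriv_fun_sub d2 d3, hw1 x, hw2 x, hw3 x, hs x]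
  field_simp
  ring
end

section
/- Let v be a nonvanishing smooth function satisfying v' = v(w₁ − w₂ − w₃), where w₁, w₂, w₃ satisfy the system w₁' = w₂w₃ − w₁(w₂+w₃) + τ², w₂' = w₃w₁ − w₂(w₃+w₁) + τ², w₃' = w₁w₂ − w₃(w₁+w₂) + τ², with τ² = α²(w₁−w₂)(w₃−w₁) + β²(w₂−w₃)(w₁−w₂) + γ²(w₃−w₁)(w₂−w₃). Then v satisfies the second-order equation v'' − 2(w₁−w₂−w₃)v' − ((α²−1)w₁² + (β²−1)w₂² + (γ²−1)w₃²)v + ((α²+β²−γ²−1)w₁w₂ + (α²−β²+γ²−1)w₁w₃ − (α²−β²−γ²+1)w₂w₃)v = 0. -/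
/-- A nonvanishing solution of `v' = v(w₁ - w₂ - w₃)` satisfies the second-order
equation associated to the generalised Chazy equation. -/
theorem stmt8 (α β γ : ℝ) (w₁ w₂ w₃ τsq v : ℝ → ℝ)
    (hw₁sm : ContDiff ℝ (⊤ : ℕ∞) w₁) (hw₂sm : ContDiff ℝ (⊤ : ℕ∞) w₂) (hw₃sm : ContDiff ℝ (⊤ : ℕ∞) w₃)
    (hvsm : ContDiff ℝ (⊤ : ℕ∞) v) (hv0 : ∀ x, v x ≠ 0)
    (hτ : ∀ x, τsq x = α^2 * (w₁ x - w₂ x) * (w₃ x - w₁ x)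
        + β^2 * (w₂ x - w₃ x) * (w₁ x - w₂ x) + γ^2 * (w₃ x - w₁ x) * (w₂ x - w₃ x))
    (hw1 : ∀ x, deriv w₁ x = w₂ x * w₃ x - w₁ x * (w₂ x + w₃ x) + τsq x)
    (hw2 : ∀ x, deriv w₂ x = w₃ x * w₁ x - w₂ x * (w₃ x + w₁ x) + τsq x)
    (hw3 : ∀ x, deriv w₃ x = w₁ x * w₂ x - w₃ x * (w₁ x + w₂ x) + τsq x)
    (hv : ∀ x, deriv v x = v x * (w₁ x - w₂ x - w₃ x)) :
    ∀ x, deriv^[2] v x - 2 * (w₁ x - w₂ x - w₃ x) * deriv v x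
      - ((α^2 - 1) * (w₁ x)^2 + (β^2 - 1) * (w₂ x)^2 + (γ^2 - 1) * (w₃ x)^2) * v x
      + ((α^2 + β^2 - γ^2 - 1) * w₁ x * w₂ x + (α^2 - β^2 + γ^2 - 1) * w₁ x * w₃ x
        - (α^2 - β^2 - γ^2 + 1) * w₂ x * w₃ x) * v x = 0 := by
  have hvd : Differentiable ℝ v := hvsm.differentiable (by simp)
  have h1 : Differentiable ℝ w₁ := hw₁sm.differentiable (by simp)
  have h2 : Differentiable ℝ w₂ := hw₂sm.differentiable (by simp)
  have h3 : Differentiable ℝ w₃ := hw₃sm.differentiable (by simp)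
  have hdv : deriv v = fun y => v y * (w₁ y - w₂ y - w₃ y) := funext hv
  have hsec : ∀ x, deriv^[2] v x = deriv v x * (w₁ x - w₂ x - w₃ x)
      + v x * (deriv w₁ x - deriv w₂ x - deriv w₃ x) := by
    intro x
    have : deriv^[2] v x = deriv (fun y => v y * (w₁ y - w₂ y - w₃ y)) x := by
      rw [show deriv^[2] v = deriv (deriv v) from rfl, hdv]
    rw [this, deriv_fun_mul (hvd x) (((h1 x).fun_sub (h2 x)).fun_sub (h3 x)),
      deriv_fun_sub ((h1 x).fun_sub (h2 x)) (h3 x), deriv_fun_sub (h1 x) (h2 x)]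
  intro x
  rw [hsec x, hv x, hw1 x, hw2 x, hw3 x, hτ x]
  ring
end

section
/- The positive integer solutions of the equation 5m̃² − m² = 1 are exactly the pairs (m, m̃) with m = (1/2)((2+√5)^(2n+1) + (2−√5)^(2n+1)) and m̃ = (√5/10)((2+√5)^(2n+1) − (2−√5)^(2n+1)) for some n ∈ ℕ; in particular the smallest solutions are (m, m̃) = (2,1), (38,17), (682,305). -/
/-!
Write solutions as `m + m̃√5`. Then `5m̃² - m² = 1` says `m + m̃√5` has norm `-1` in `ℤ[√5]`, and
multiplying by the fundamental unit `9 + 4√5 = (2 + √5)²` of norm `1` permutes the solutions.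
Starting from `2 + √5` this produces `(2 + √5)^(2n+1)`, whose conjugate is `(2 - √5)^(2n+1)`;
conversely, multiplying a solution with `m ≠ 2` by `9 - 4√5` gives a smaller positive solution,
so every positive solution is reached.
-/

/-- The `n`-th positive solution `(m, m̃)`, i.e. `m + m̃√5 = (2 + √5)^(2n+1)`. -/
def negPellSol : ℕ → ℤ × ℤ
  | 0 => (2, 1)
  | n + 1 => (9 * (negPellSol n).1 + 20 * (negPellSol n).2,
      4 * (negPellSol n).1 + 9 * (negPellSol n).2)

lemma negPellSol_eq (n : ℕ) : 5 * (negPellSol n).2 ^ 2 - (negPellSol n).1 ^ 2 = 1 := by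
  induction n with
  | zero => simp [negPellSol]
  | succ n ih =>
    simp only [negPellSol]
    linear_combination ih

/-- Both `s = √5` and its conjugate `s = -√5` are covered, which gives the two closed forms. -/
lemma negPellSol_add_mul {R : Type*} [CommRing R] {s : R} (hs : s ^ 2 = 5) (n : ℕ) :
    ((negPellSol n).1 : R) + (negPellSol n).2 * s = (2 + s) ^ (2 * n + 1) := by
  induction n with
  | zero => simp [negPellSol]
  | succ n ih =>
    rw [show 2 * (n + 1) + 1 = 2 * n + 1 + 2 by ring, pow_add, ← ih]
    simp only [negPellSol]
    push_cast
    linear_combination (-(negPellSol n).1 - 4 * (negPellSol n).2 - (negPellSol n).2 * s) * hs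

lemma cast_negPellSol_fst (n : ℕ) :
    ((negPellSol n).1 : ℝ) =
      (1/2) * ((2 + Real.sqrt 5) ^ (2*n+1) + (2 - Real.sqrt 5) ^ (2*n+1)) := by
  have hs : Real.sqrt 5 ^ 2 = 5 := Real.sq_sqrt (by norm_num)
  rw [← negPellSol_add_mul hs, sub_eq_add_neg, ← negPellSol_add_mul (by rwa [neg_sq])]
  ring

lemma cast_negPellSol_snd (n : ℕ) :
    ((negPellSol n).2 : ℝ) =
      (Real.sqrt 5/10) * ((2 + Real.sqrt 5) ^ (2*n+1) - (2 - Real.sqrt 5) ^ (2*n+1)) := by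
  have hs : Real.sqrt 5 ^ 2 = 5 := Real.sq_sqrt (by norm_num)
  rw [← negPellSol_add_mul hs, sub_eq_add_neg 2, ← negPellSol_add_mul (by rwa [neg_sq])]
  linear_combination (-(negPellSol n).2 / 5 : ℝ) * hs

lemma nine_le_of_negPell {m mt : ℤ} (h : 5 * mt ^ 2 - m ^ 2 = 1) (hm : 0 < m) (hmt : 0 < mt)
    (hm2 : m ≠ 2) : 9 ≤ m := by
  by_contra! hlt
  have : mt ≤ 3 := by nlinarith
  interval_cases m <;> interval_cases mt <;> omega

/-- Multiplication of `m + m̃√5` by `9 - 4√5`. -/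
lemma negPell_descent {m mt : ℤ} (h : 5 * mt ^ 2 - m ^ 2 = 1) (hm : 9 ≤ m) (hmt : 0 < mt) :
    5 * (9 * mt - 4 * m) ^ 2 - (9 * m - 20 * mt) ^ 2 = 1 ∧
      0 < 9 * m - 20 * mt ∧ 0 < 9 * mt - 4 * m ∧ 9 * m - 20 * mt < m :=
  ⟨by linear_combination h, by nlinarith, by nlinarith, by nlinarith⟩

lemma exists_negPellSol_eq {m mt : ℤ} (h : 5 * mt ^ 2 - m ^ 2 = 1) (hm : 0 < m) (hmt : 0 < mt) :
    ∃ n, negPellSol n = (m, mt) := by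
  obtain ⟨k, rfl⟩ := Int.eq_ofNat_of_zero_le hm.le
  induction k using Nat.strong_induction_on generalizing mt with
  | _ k ih =>
    by_cases hk : (k : ℤ) = 2
    · have hmt1 : mt = 1 := by nlinarith
      exact ⟨0, by simp [negPellSol, hk, hmt1]⟩
    obtain ⟨h', hm', hmt', hlt⟩ := negPell_descent h (nine_le_of_negPell h hm hmt hk) hmt
    obtain ⟨k', hk'⟩ := Int.eq_ofNat_of_zero_le hm'.le
    obtain ⟨n, hn⟩ := ih k' (by omega) hmt' (hk' ▸ h') (hk' ▸ hm')
    refine ⟨n + 1, ?_⟩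
    simp only [negPellSol, hn, Prod.mk.injEq]
    omega

/-- Positive integer solutions of the negative-Pell-type equation `5m̃² - m² = 1`. -/
theorem stmt10 :
    (∀ m mt : ℤ, 0 < m → 0 < mt →
      (5 * mt^2 - m^2 = 1 ↔
        ∃ n : ℕ, (m : ℝ) = (1/2) * ((2 + Real.sqrt 5)^(2*n+1) + (2 - Real.sqrt 5)^(2*n+1))
          ∧ (mt : ℝ) = (Real.sqrt 5/10) * ((2 + Real.sqrt 5)^(2*n+1) - (2 - Real.sqrt 5)^(2*n+1))))
    ∧ 5 * (1 : ℤ)^2 - 2^2 = 1 ∧ 5 * (17 : ℤ)^2 - 38^2 = 1 ∧ 5 * (305 : ℤ)^2 - 682^2 = 1 := by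
  refine ⟨fun m mt hm hmt => ⟨fun h => ?_, ?_⟩, by norm_num, by norm_num, by norm_num⟩
  · obtain ⟨n, hn⟩ := exists_negPellSol_eq h hm hmt
    refine ⟨n, ?_, ?_⟩
    · rw [← cast_negPellSol_fst, hn]
    · rw [← cast_negPellSol_snd, hn]
  · rintro ⟨n, h1, h2⟩
    have e1 : m = (negPellSol n).1 := by exact_mod_cast h1.trans (cast_negPellSol_fst n).symm
    have e2 : mt = (negPellSol n).2 := by exact_mod_cast h2.trans (cast_negPellSol_snd n).symm
    rw [e1, e2]
    exact negPellSol_eq n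
end

section
/- The positive integer solutions of 10ã² − a² = 1 are exactly the pairs (a, ã) with a = (1/2)((3+√10)^(2n+1) + (3−√10)^(2n+1)) and ã = (√10/20)((3+√10)^(2n+1) − (3−√10)^(2n+1)) for some n ∈ ℕ; in particular the smallest solutions are (a, ã) = (3,1), (117,37), (4443,1405). -/
/-!
A solution of `10ã² - a² = 1` is a unit `a + ã√10` of norm `-1` in `ℤ√10`. In `ℤ√(m² + 1)`, a
unit `z = x + y√(m² + 1)` with `x, y > 0` is a power of `u = m + √(m² + 1)`: either `x ≤ m y`,
which forces `z = u`, or `z u⁻¹ = z (-m + √(m² + 1))` is again such a unit with smaller `y`.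
Since `N(u) = -1`, the norm `-1` units are the odd powers, and the two real embeddings
`√10 ↦ ±√10` turn `a + ã√10 = (3 + √10)^(2n+1)` into the closed formulas.
-/

namespace Zsqrtd

variable {m : ℤ}

def sqAddOneUnit (m : ℤ) : ℤ√(m ^ 2 + 1) := ⟨m, 1⟩

theorem norm_sqAddOneUnit : (sqAddOneUnit m).norm = -1 := by
  simp only [sqAddOneUnit, norm_def]
  ring

theorem norm_sqAddOneUnit_pow (k : ℕ) : (sqAddOneUnit m ^ k).norm = (-1) ^ k := by
  induction k with
  | zero => exact norm_one
  | succ k ih =>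
    rw [pow_succ (sqAddOneUnit m), norm_mul, ih, norm_sqAddOneUnit, pow_succ (-1 : ℤ)]

theorem eq_sqAddOneUnit_of_re_le {z : ℤ√(m ^ 2 + 1)} (hnorm : z.norm = 1 ∨ z.norm = -1)
    (hre : 0 < z.re) (him : 0 < z.im) (hle : z.re ≤ m * z.im) : z = sqAddOneUnit m := by
  rw [norm_def] at hnorm
  have hsq : z.re * z.re ≤ m * z.im * (m * z.im) := mul_self_le_mul_self hre.le hle
  have him1 : z.im = 1 := by
    have : z.im * z.im ≤ 1 := by rcases hnorm with h | h <;> nlinarith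
    nlinarith
  rw [him1] at hnorm hsq
  have hre_sq : z.re * z.re = m * m := by rcases hnorm with h | h <;> nlinarith
  have hre' : z.re = m := by nlinarith
  exact Zsqrtd.ext hre' him1

theorem sqAddOneUnit_descent (hm : 0 < m) {z : ℤ√(m ^ 2 + 1)}
    (hnorm : z.norm = 1 ∨ z.norm = -1) (him : 0 < z.im) (hlt : m * z.im < z.re) :
    0 < (z * ⟨-m, 1⟩).re ∧ 0 < (z * ⟨-m, 1⟩).im ∧ (z * ⟨-m, 1⟩).im < z.im := by
  simp only [re_mul, im_mul]
  rw [norm_def] at hnorm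
  refine ⟨?_, by nlinarith, ?_⟩
  · by_contra! h
    have : (m ^ 2 + 1) * z.im * ((m ^ 2 + 1) * z.im) ≤ m * z.re * (m * z.re) :=
      mul_self_le_mul_self (by positivity) (by linarith)
    rcases hnorm with h | h <;> nlinarith [mul_pos him him]
  · by_contra! h
    have : (m + 1) * z.im * ((m + 1) * z.im) ≤ z.re * z.re :=
      mul_self_le_mul_self (by positivity) (by linarith)
    rcases hnorm with h | h <;> nlinarith [mul_pos him him, mul_pos hm (mul_pos him him)]

theorem exists_eq_sqAddOneUnit_pow_of_isUnit (hm : 0 < m) {z : ℤ√(m ^ 2 + 1)} (hz : IsUnit z)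
    (hre : 0 < z.re) (him : 0 < z.im) : ∃ k, z = sqAddOneUnit m ^ k := by
  induction hn : z.im.toNat using Nat.strong_induction_on generalizing z with
  | _ n ih =>
  have hnorm : z.norm = 1 ∨ z.norm = -1 := Int.isUnit_iff.1 ((isUnit_iff_norm_isUnit z).1 hz)
  rcases le_or_gt z.re (m * z.im) with hle | hlt
  · exact ⟨1, by rw [pow_one]; exact eq_sqAddOneUnit_of_re_le hnorm hre him hle⟩
  · have hinv : (⟨-m, 1⟩ : ℤ√(m ^ 2 + 1)) * sqAddOneUnit m = 1 := by
      ext <;> simp only [sqAddOneUnit, re_mul, im_mul, re_one, im_one] <;> ring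
    obtain ⟨hre', him', hlt'⟩ := sqAddOneUnit_descent hm hnorm him hlt
    obtain ⟨k, hk⟩ := ih _ (by omega) (hz.mul (.of_mul_eq_one _ hinv)) hre' him' rfl
    exact ⟨k + 1, by rw [pow_succ (sqAddOneUnit m), ← hk, mul_assoc, hinv, mul_one]⟩

theorem norm_eq_neg_one_iff_exists_eq_sqAddOneUnit_pow (hm : 0 < m) {z : ℤ√(m ^ 2 + 1)}
    (hre : 0 < z.re) (him : 0 < z.im) :
    z.norm = -1 ↔ ∃ n : ℕ, z = sqAddOneUnit m ^ (2 * n + 1) := by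
  constructor
  · intro hnorm
    have hz : IsUnit z := (isUnit_iff_norm_isUnit z).2 (by rw [hnorm]; exact isUnit_one.neg)
    obtain ⟨k, rfl⟩ := exists_eq_sqAddOneUnit_pow_of_isUnit hm hz hre him
    rw [norm_sqAddOneUnit_pow, neg_one_pow_eq_neg_one_iff_odd (by decide)] at hnorm
    obtain ⟨n, rfl⟩ := hnorm
    exact ⟨n, rfl⟩
  · rintro ⟨n, rfl⟩
    rw [norm_sqAddOneUnit_pow, pow_succ, pow_mul]
    norm_num

theorem re_add_im_mul_sqAddOneUnit_pow {R : Type*} [CommRing R] {r : R} (hr : r * r = m ^ 2 + 1)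
    (k : ℕ) : ((sqAddOneUnit m ^ k).re : R) + (sqAddOneUnit m ^ k).im * r = (m + r) ^ k := by
  have := map_pow (lift ⟨r, by rw [hr]; push_cast; rfl⟩) (sqAddOneUnit m) k
  simpa only [lift_apply_apply, sqAddOneUnit, Int.cast_one, one_mul] using this

theorem re_im_sqAddOneUnit_three_pow (k : ℕ) :
    ((sqAddOneUnit 3 ^ k).re : ℝ) = 1 / 2 * ((3 + √10) ^ k + (3 - √10) ^ k) ∧
      ((sqAddOneUnit 3 ^ k).im : ℝ) = √10 / 20 * ((3 + √10) ^ k - (3 - √10) ^ k) := by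
  have hs : √10 * √10 = 10 := Real.mul_self_sqrt (by norm_num)
  have hplus := re_add_im_mul_sqAddOneUnit_pow (m := 3) (r := √10) (by norm_num [hs]) k
  have hminus := re_add_im_mul_sqAddOneUnit_pow (m := 3) (r := -√10) (by norm_num [hs]) k
  push_cast at hplus hminus
  rw [← sub_eq_add_neg] at hminus
  rw [← hplus, ← hminus]
  constructor
  · ring
  · linear_combination (-((sqAddOneUnit 3 ^ k).im : ℝ) / 10) * hs

end Zsqrtd

/-- Positive integer solutions of the negative-Pell-type equation `10ã² - a² = 1`. -/
theorem stmt11 :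
    (∀ a at' : ℤ, 0 < a → 0 < at' →
      (10 * at'^2 - a^2 = 1 ↔
        ∃ n : ℕ, (a : ℝ) = (1/2) * ((3 + Real.sqrt 10)^(2*n+1) + (3 - Real.sqrt 10)^(2*n+1))
          ∧ (at' : ℝ) = (Real.sqrt 10/20) * ((3 + Real.sqrt 10)^(2*n+1) - (3 - Real.sqrt 10)^(2*n+1))))
    ∧ 10 * (1 : ℤ)^2 - 3^2 = 1 ∧ 10 * (37 : ℤ)^2 - 117^2 = 1 ∧ 10 * (1405 : ℤ)^2 - 4443^2 = 1 := by
  refine ⟨fun a at' ha hat => ?_, by norm_num, by norm_num, by norm_num⟩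
  have hnorm : 10 * at' ^ 2 - a ^ 2 = 1 ↔ (⟨a, at'⟩ : ℤ√(3 ^ 2 + 1)).norm = -1 := by
    rw [Zsqrtd.norm_def]
    constructor <;> intro h <;> linarith
  rw [hnorm, Zsqrtd.norm_eq_neg_one_iff_exists_eq_sqAddOneUnit_pow (by norm_num) ha hat]
  refine exists_congr fun n => ?_
  obtain ⟨hre, him⟩ := Zsqrtd.re_im_sqAddOneUnit_three_pow (2 * n + 1)
  rw [Zsqrtd.ext_iff, ← hre, ← him, Int.cast_inj, Int.cast_inj]
end

section
/- Let w₁, w₂, w₃ be smooth functions satisfying the system w₁' = w₂w₃ − w₁(w₂+w₃) + τ², w₂' = w₃w₁ − w₂(w₃+w₁) + τ², w₃' = w₁w₂ − w₃(w₁+w₂) + τ² with τ² = α²(w₁−w₂)(w₃−w₁) + β²(w₂−w₃)(w₁−w₂) + γ²(w₃−w₁)(w₂−w₃) and (α,β,γ) = (4/3, 4/3, 4/3). Let P = −2w₁ − 2w₂ − 2w₃ and Q = P² − 6P'. If v is a nonvanishing solution of v' = v(w₁−w₂−w₃) and u is a smooth function, then ρ = u/v satisfies ρ'' − (1/45)Qρ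 = 0 if and only if u satisfies u'' − 2(w₁−w₂−w₃)u' − ((α̃²−1)w₁² + (β̃²−1)w₂² + (γ̃²−1)w₃²)u + ((α̃²+β̃²−γ̃²−1)w₁w₂ + (α̃²−β̃²+γ̃²−1)w₁w₃ − (α̃²−β̃²−γ̃²+1)w₂w₃)u = 0 with (α̃, β̃, γ̃) = (2/3, 2/3, 2/3). -/
theorem stmt14 (w₁ w₂ w₃ τsq P Q v u ρ : ℝ → ℝ)
    (hw₁sm : ContDiff ℝ (⊤ : ℕ∞) w₁) (hw₂sm : ContDiff ℝ (⊤ : ℕ∞) w₂) (hw₃sm : ContDiff ℝ (⊤ : ℕ∞) w₃)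
    (hvsm : ContDiff ℝ (⊤ : ℕ∞) v) (husm : ContDiff ℝ (⊤ : ℕ∞) u)
    (α β γ : ℝ) (hα : α = 4/3) (hβ : β = 4/3) (hγ : γ = 4/3)
    (hτ : ∀ x, τsq x = α^2 * (w₁ x - w₂ x) * (w₃ x - w₁ x)
        + β^2 * (w₂ x - w₃ x) * (w₁ x - w₂ x) + γ^2 * (w₃ x - w₁ x) * (w₂ x - w₃ x))
    (hw1 : ∀ x, deriv w₁ x = w₂ x * w₃ x - w₁ x * (w₂ x + w₃ x) + τsq x)
    (hw2 : ∀ x, deriv w₂ x = w₃ x * w₁ x - w₂ x * (w₃ x + w₁ x) + τsq x)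
    (hw3 : ∀ x, deriv w₃ x = w₁ x * w₂ x - w₃ x * (w₁ x + w₂ x) + τsq x)
    (hP : ∀ x, P x = -2 * w₁ x - 2 * w₂ x - 2 * w₃ x)
    (hQ : ∀ x, Q x = (P x)^2 - 6 * deriv P x)
    (hv0 : ∀ x, v x ≠ 0)
    (hv : ∀ x, deriv v x = v x * (w₁ x - w₂ x - w₃ x))
    (hρ : ∀ x, ρ x = u x / v x)
    (αt βt γt : ℝ) (hαt : αt = 2/3) (hβt : βt = 2/3) (hγt : γt = 2/3) :
    (∀ x, deriv^[2] ρ x - (1/45) * Q x * ρ x = 0)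
    ↔ (∀ x, deriv^[2] u x - 2 * (w₁ x - w₂ x - w₃ x) * deriv u x
      - ((αt^2 - 1) * (w₁ x)^2 + (βt^2 - 1) * (w₂ x)^2 + (γt^2 - 1) * (w₃ x)^2) * u x
      + ((αt^2 + βt^2 - γt^2 - 1) * w₁ x * w₂ x + (αt^2 - βt^2 + γt^2 - 1) * w₁ x * w₃ x
        - (αt^2 - βt^2 - γt^2 + 1) * w₂ x * w₃ x) * u x = 0) := by
  have hw₁d : Differentiable ℝ w₁ := hw₁sm.differentiable (by simp)
  have hw₂d : Differentiable ℝ w₂ := hw₂sm.differentiable (by simp)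
  have hw₃d : Differentiable ℝ w₃ := hw₃sm.differentiable (by simp)
  have hvd : Differentiable ℝ v := hvsm.differentiable (by simp)
  have hud : Differentiable ℝ u := husm.differentiable (by simp)
  have hu1d : Differentiable ℝ (deriv u) :=
    ((husm.of_le (by simp)).iterate_deriv 1).differentiable (by simp)
  have hρfun : ρ = fun x => u x / v x := funext hρ
  have hρ1 : ∀ x, HasDerivAt ρ ((deriv u x - u x * (w₁ x - w₂ x - w₃ x)) / v x) x := by
    intro x
    have h : HasDerivAt (fun x => u x / v x) _ x := ((hud x).hasDerivAt.div (hvd x).hasDerivAt (hv0 x))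
    rw [← hρfun] at h
    convert h using 1
    rw [hv x]
    field_simp [hv0 x]
  have hρ1' : deriv ρ = fun x => (deriv u x - u x * (w₁ x - w₂ x - w₃ x)) / v x :=
    funext fun x => (hρ1 x).deriv
  have key : ∀ x, deriv^[2] ρ x - (1/45) * Q x * ρ x =
      (deriv^[2] u x - 2 * (w₁ x - w₂ x - w₃ x) * deriv u x
      - ((αt^2 - 1) * (w₁ x)^2 + (βt^2 - 1) * (w₂ x)^2 + (γt^2 - 1) * (w₃ x)^2) * u x
      + ((αt^2 + βt^2 - γt^2 - 1) * w₁ x * w₂ x + (αt^2 - βt^2 + γt^2 - 1) * w₁ x * w₃ x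
        - (αt^2 - βt^2 - γt^2 + 1) * w₂ x * w₃ x) * u x) / v x := by
    intro x
    -- derivative of P
    have hPd : deriv P x = -2 * deriv w₁ x - 2 * deriv w₂ x - 2 * deriv w₃ x := by
      have hPf : P = fun x => -2 * w₁ x - 2 * w₂ x - 2 * w₃ x := funext hP
      rw [hPf]
      have h1 : HasDerivAt (fun x => -2 * w₁ x - 2 * w₂ x - 2 * w₃ x)
          (-2 * deriv w₁ x - 2 * deriv w₂ x - 2 * deriv w₃ x) x :=
        (((hw₁d x).hasDerivAt.const_mul (-2)).sub
          ((hw₂d x).hasDerivAt.const_mul 2)).sub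
          ((hw₃d x).hasDerivAt.const_mul 2)
      exact h1.deriv
    -- second derivative of ρ
    have hN : HasDerivAt (fun x => deriv u x - u x * (w₁ x - w₂ x - w₃ x))
        (deriv (deriv u) x - (deriv u x * (w₁ x - w₂ x - w₃ x)
          + u x * (deriv w₁ x - deriv w₂ x - deriv w₃ x))) x :=
      (hu1d x).hasDerivAt.sub
        ((hud x).hasDerivAt.mul
          (((hw₁d x).hasDerivAt.sub (hw₂d x).hasDerivAt).sub (hw₃d x).hasDerivAt))
    have hρ2 : HasDerivAt (deriv ρ)
        (((deriv (deriv u) x - (deriv u x * (w₁ x - w₂ x - w₃ x)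
          + u x * (deriv w₁ x - deriv w₂ x - deriv w₃ x))) * v x
          - (deriv u x - u x * (w₁ x - w₂ x - w₃ x)) * deriv v x) / (v x)^2) x := by
      rw [hρ1']
      exact hN.div (hvd x).hasDerivAt (hv0 x)
    have h2ρ : deriv^[2] ρ x = deriv (deriv ρ) x := rfl
    have h2u : deriv^[2] u x = deriv (deriv u) x := rfl
    rw [h2ρ, hρ2.deriv, h2u, hρ x, hQ x, hPd, hP x, hv x,
      hw1 x, hw2 x, hw3 x, hτ x, hα, hβ, hγ, hαt, hβt, hγt]
    field_simp [hv0 x]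
    ring
  constructor
  · intro h x
    have hk := key x
    rw [h x] at hk
    have := (div_eq_zero_iff.mp hk.symm).resolve_right (hv0 x)
    linarith [this]
  · intro h x
    rw [key x, h x, zero_div]
end

section
/- Let w₁, w₂, w₃ satisfy the system w₁' = w₂w₃ − w₁(w₂+w₃) + τ², w₂' = w₃w₁ − w₂(w₃+w₁) + τ², w₃' = w₁w₂ − w₃(w₁+w₂) + τ² with τ² = α²(w₁−w₂)(w₃−w₁) + β²(w₂−w₃)(w₁−w₂) + γ²(w₃−w₁)(w₂−w₃) and (α,β,γ) = (3,3,3). Let P = −2w₁ − 2w₂ − 2w₃ and Q = P² − 6P'. If v is a nonvanishing solution of v' = v(w₁−w₂−w₃) and u is smooth, then ν = u/v satisfies ν'' − (1/40)Qν = 0 if and only if u satisfies u'' − 2(w₁−w₂−w₃)u' − ((α̃²−1)w₁² + (β̃²−1)w₂² + (γ̃²−1)w₃²)u + ((α̃²+β̃²−γ̃²−1)w₁w₂ + (α̃²−β̃²+γ̃²−1)w₁w₃ − (α̃²−β̃²−γ̃²+1)w₂w₃)u = 0 with (α̃, β̃, γ̃) = (1,1,1). -/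
theorem stmt15 (w₁ w₂ w₃ τsq P Q v u ρ : ℝ → ℝ)
    (hw₁sm : ContDiff ℝ (⊤ : ℕ∞) w₁) (hw₂sm : ContDiff ℝ (⊤ : ℕ∞) w₂) (hw₃sm : ContDiff ℝ (⊤ : ℕ∞) w₃)
    (hvsm : ContDiff ℝ (⊤ : ℕ∞) v) (husm : ContDiff ℝ (⊤ : ℕ∞) u)
    (α β γ : ℝ) (hα : α = 3) (hβ : β = 3) (hγ : γ = 3)
    (hτ : ∀ x, τsq x = α^2 * (w₁ x - w₂ x) * (w₃ x - w₁ x)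
        + β^2 * (w₂ x - w₃ x) * (w₁ x - w₂ x) + γ^2 * (w₃ x - w₁ x) * (w₂ x - w₃ x))
    (hw1 : ∀ x, deriv w₁ x = w₂ x * w₃ x - w₁ x * (w₂ x + w₃ x) + τsq x)
    (hw2 : ∀ x, deriv w₂ x = w₃ x * w₁ x - w₂ x * (w₃ x + w₁ x) + τsq x)
    (hw3 : ∀ x, deriv w₃ x = w₁ x * w₂ x - w₃ x * (w₁ x + w₂ x) + τsq x)
    (hP : ∀ x, P x = -2 * w₁ x - 2 * w₂ x - 2 * w₃ x)
    (hQ : ∀ x, Q x = (P x)^2 - 6 * deriv P x)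
    (hv0 : ∀ x, v x ≠ 0)
    (hv : ∀ x, deriv v x = v x * (w₁ x - w₂ x - w₃ x))
    (hρ : ∀ x, ρ x = u x / v x)
    (αt βt γt : ℝ) (hαt : αt = 1) (hβt : βt = 1) (hγt : γt = 1) :
    (∀ x, deriv^[2] ρ x - (1/40) * Q x * ρ x = 0)
    ↔ (∀ x, deriv^[2] u x - 2 * (w₁ x - w₂ x - w₃ x) * deriv u x
      - ((αt^2 - 1) * (w₁ x)^2 + (βt^2 - 1) * (w₂ x)^2 + (γt^2 - 1) * (w₃ x)^2) * u x
      + ((αt^2 + βt^2 - γt^2 - 1) * w₁ x * w₂ x + (αt^2 - βt^2 + γt^2 - 1) * w₁ x * w₃ x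
        - (αt^2 - βt^2 - γt^2 + 1) * w₂ x * w₃ x) * u x = 0) := by
  subst hα hβ hγ hαt hβt hγt
  -- differentiability facts
  have hw1d : Differentiable ℝ w₁ := hw₁sm.differentiable (by simp)
  have hw2d : Differentiable ℝ w₂ := hw₂sm.differentiable (by simp)
  have hw3d : Differentiable ℝ w₃ := hw₃sm.differentiable (by simp)
  have hvd : Differentiable ℝ v := hvsm.differentiable (by simp)
  have hud : Differentiable ℝ u := husm.differentiable (by simp)
  have hdud : Differentiable ℝ (deriv u) :=
    (contDiff_infty_iff_deriv.mp (husm.of_le (by simp))).2.differentiable (by simp)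
  have hρfun : ρ = fun x => u x / v x := funext hρ
  have hsd : Differentiable ℝ (fun x => w₁ x - w₂ x - w₃ x) := (hw1d.sub hw2d).sub hw3d
  have hds : ∀ x, deriv (fun x => w₁ x - w₂ x - w₃ x) x
      = deriv w₁ x - deriv w₂ x - deriv w₃ x := by
    intro x
    rw [deriv_fun_sub (f := fun y => w₁ y - w₂ y) ((hw1d x).sub (hw2d x)) (hw3d x), deriv_fun_sub (hw1d x) (hw2d x)]
  -- first derivative of ρ
  have hd1 : ∀ x, deriv ρ x
      = (deriv u x - u x * (w₁ x - w₂ x - w₃ x)) / v x := by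
    intro x
    rw [hρfun, deriv_fun_div (hud x) (hvd x) (hv0 x), hv x]
    field_simp [hv0 x]
  have hd1fun : deriv ρ = fun x =>
      (deriv u x - u x * (w₁ x - w₂ x - w₃ x)) / v x := funext hd1
  have hNd : Differentiable ℝ (fun x => deriv u x - u x * (w₁ x - w₂ x - w₃ x)) :=
    hdud.sub (hud.mul hsd)
  -- second derivative of ρ
  have hd2 : ∀ x, deriv^[2] ρ x
      = ((deriv (deriv u) x - (deriv u x * (w₁ x - w₂ x - w₃ x)
          + u x * (deriv w₁ x - deriv w₂ x - deriv w₃ x))) * v x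
        - (deriv u x - u x * (w₁ x - w₂ x - w₃ x)) * (v x * (w₁ x - w₂ x - w₃ x)))
        / (v x)^2 := by
    intro x
    show deriv (deriv ρ) x = _
    rw [hd1fun, deriv_fun_div (hNd x) (hvd x) (hv0 x),
      deriv_fun_sub (g := fun y => u y * (w₁ y - w₂ y - w₃ y)) (hdud x) ((hud x).mul (hsd x)),
      deriv_fun_mul (hud x) (hsd x), hds x, hv x]
  -- derivative of P
  have hPfun : P = fun x => -2 * w₁ x - 2 * w₂ x - 2 * w₃ x := funext hP
  have hdP : ∀ x, deriv P x = -2 * deriv w₁ x - 2 * deriv w₂ x - 2 * deriv w₃ x := by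
    intro x
    rw [hPfun]
    rw [deriv_fun_sub (f := fun y => -2 * w₁ y - 2 * w₂ y) (((hw1d.const_mul (-2 : ℝ)).sub (hw2d.const_mul (2 : ℝ))) x)
        ((hw3d.const_mul (2 : ℝ)) x),
      deriv_fun_sub ((hw1d.const_mul (-2 : ℝ)) x) ((hw2d.const_mul (2 : ℝ)) x),
      deriv_const_mul _ (hw1d x), deriv_const_mul _ (hw2d x), deriv_const_mul _ (hw3d x)]
  have hduu : ∀ x, deriv^[2] u x = deriv (deriv u) x := fun x => rfl
  -- key identity
  have key : ∀ x, deriv^[2] ρ x - (1/40) * Q x * ρ x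
      = (deriv^[2] u x - 2 * (w₁ x - w₂ x - w₃ x) * deriv u x) / v x := by
    intro x
    rw [hd2 x, hQ x, hdP x, hP x, hρ x, hw1 x, hw2 x, hw3 x, hτ x, hduu x]
    field_simp [hv0 x]
    ring
  constructor
  · intro h x
    have h2 : (deriv^[2] u x - 2 * (w₁ x - w₂ x - w₃ x) * deriv u x) / v x = 0 := by
      rw [← key x]; exact h x
    have h3 : deriv^[2] u x - 2 * (w₁ x - w₂ x - w₃ x) * deriv u x = 0 := by
      rcases div_eq_zero_iff.mp h2 with h' | h'
      · exact h'
      · exact absurd h' (hv0 x)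
    linear_combination h3
  · intro h x
    rw [key x]
    have h3 : deriv^[2] u x - 2 * (w₁ x - w₂ x - w₃ x) * deriv u x = 0 := by
      linear_combination h x
    rw [h3, zero_div]
end

section
/- Let s be a smooth function with s' > 0 and s, s−1 nonvanishing, satisfying the Schwarzian equation {s,x} + (1/2)(s')²V(s) = 0 where V(s) = (1−β²)/s² + (1−γ²)/(s−1)² + (β²+γ²−α²−1)/(s(s−1)). Define w₁ = −(1/2)(log(s'/(s(s−1))))', w₂ = −(1/2)(log(s'/(s−1)))', w₃ = −(1/2)(log(s'/s))'. Then w₁, w₂, w₃ satisfy the system w₁' = w₂w₃ − w₁(w₂+w₃) + τ², w₂' = w₃w₁ − w₂(w₃+w₁) + τ², w₃' = w₁w₂ − w₃(w₁+w₂) + τ², where τ² = α²(w₁−w₂)(w₃−w₁) + β²(w₂−w₃)(w₁−w₂) + γ²(w₃−w₁)(w₂−w₃). -/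
set_option maxHeartbeats 1000000

private lemma walg (α β γ S D E : ℝ) (hS : S ≠ 0) (hS1 : S - 1 ≠ 0) (hD : D ≠ 0) :
    (-(1/2) * ((1/2 * (E/D)^2 - 1/2 * D^2 * ((1 - β^2)/S^2 + (1 - γ^2)/(S-1)^2
        + (β^2 + γ^2 - α^2 - 1)/(S*(S-1)))) - (E * S - D * D)/S^2
        - (E * (S-1) - D * D)/(S-1)^2)
      = (-(1/2) * (E/D - D/(S-1))) * (-(1/2) * (E/D - D/S))
        - (-(1/2) * (E/D - D/S - D/(S-1))) * ((-(1/2) * (E/D - D/(S-1))) + (-(1/2) * (E/D - D/S)))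
        + (α^2 * ((-(1/2) * (E/D - D/S - D/(S-1))) - (-(1/2) * (E/D - D/(S-1))))
            * ((-(1/2) * (E/D - D/S)) - (-(1/2) * (E/D - D/S - D/(S-1))))
          + β^2 * ((-(1/2) * (E/D - D/(S-1))) - (-(1/2) * (E/D - D/S)))
            * ((-(1/2) * (E/D - D/S - D/(S-1))) - (-(1/2) * (E/D - D/(S-1))))
          + γ^2 * ((-(1/2) * (E/D - D/S)) - (-(1/2) * (E/D - D/S - D/(S-1))))
            * ((-(1/2) * (E/D - D/(S-1))) - (-(1/2) * (E/D - D/S)))))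
    ∧ (-(1/2) * ((1/2 * (E/D)^2 - 1/2 * D^2 * ((1 - β^2)/S^2 + (1 - γ^2)/(S-1)^2
        + (β^2 + γ^2 - α^2 - 1)/(S*(S-1)))) - (E * (S-1) - D * D)/(S-1)^2)
      = (-(1/2) * (E/D - D/S)) * (-(1/2) * (E/D - D/S - D/(S-1)))
        - (-(1/2) * (E/D - D/(S-1))) * ((-(1/2) * (E/D - D/S)) + (-(1/2) * (E/D - D/S - D/(S-1))))
        + (α^2 * ((-(1/2) * (E/D - D/S - D/(S-1))) - (-(1/2) * (E/D - D/(S-1))))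
            * ((-(1/2) * (E/D - D/S)) - (-(1/2) * (E/D - D/S - D/(S-1))))
          + β^2 * ((-(1/2) * (E/D - D/(S-1))) - (-(1/2) * (E/D - D/S)))
            * ((-(1/2) * (E/D - D/S - D/(S-1))) - (-(1/2) * (E/D - D/(S-1))))
          + γ^2 * ((-(1/2) * (E/D - D/S)) - (-(1/2) * (E/D - D/S - D/(S-1))))
            * ((-(1/2) * (E/D - D/(S-1))) - (-(1/2) * (E/D - D/S)))))
    ∧ (-(1/2) * ((1/2 * (E/D)^2 - 1/2 * D^2 * ((1 - β^2)/S^2 + (1 - γ^2)/(S-1)^2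
        + (β^2 + γ^2 - α^2 - 1)/(S*(S-1)))) - (E * S - D * D)/S^2)
      = (-(1/2) * (E/D - D/S - D/(S-1))) * (-(1/2) * (E/D - D/(S-1)))
        - (-(1/2) * (E/D - D/S)) * ((-(1/2) * (E/D - D/S - D/(S-1))) + (-(1/2) * (E/D - D/(S-1))))
        + (α^2 * ((-(1/2) * (E/D - D/S - D/(S-1))) - (-(1/2) * (E/D - D/(S-1))))
            * ((-(1/2) * (E/D - D/S)) - (-(1/2) * (E/D - D/S - D/(S-1))))
          + β^2 * ((-(1/2) * (E/D - D/(S-1))) - (-(1/2) * (E/D - D/S)))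
            * ((-(1/2) * (E/D - D/S - D/(S-1))) - (-(1/2) * (E/D - D/(S-1))))
          + γ^2 * ((-(1/2) * (E/D - D/S)) - (-(1/2) * (E/D - D/S - D/(S-1))))
            * ((-(1/2) * (E/D - D/(S-1))) - (-(1/2) * (E/D - D/S))))) := by
  refine ⟨?_, ?_, ?_⟩ <;> (field_simp; ring)


/-- If `s` solves the Schwarzian equation `{s,x} + (1/2)(s')²V(s) = 0`, then the
logarithmic-derivative combinations `w₁, w₂, w₃` satisfy the first-order w-system. -/
theorem stmt18 (α β γ : ℝ) (s w₁ w₂ w₃ : ℝ → ℝ) (hssm : ContDiff ℝ (⊤ : ℕ∞) s)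
    (hs' : ∀ x, 0 < deriv s x) (hs0 : ∀ x, s x ≠ 0) (hs1 : ∀ x, s x - 1 ≠ 0)
    (hschwarz : ∀ x, (deriv (fun t => deriv^[2] s t / deriv s t) x
        - (1/2) * (deriv^[2] s x / deriv s x)^2)
      + (1/2) * (deriv s x)^2 * ((1 - β^2)/(s x)^2 + (1 - γ^2)/(s x - 1)^2
        + (β^2 + γ^2 - α^2 - 1)/(s x * (s x - 1))) = 0)
    (hw1 : ∀ x, w₁ x = -(1/2) * (deriv^[2] s x / deriv s x - deriv s x / s x
        - deriv s x / (s x - 1)))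
    (hw2 : ∀ x, w₂ x = -(1/2) * (deriv^[2] s x / deriv s x - deriv s x / (s x - 1)))
    (hw3 : ∀ x, w₃ x = -(1/2) * (deriv^[2] s x / deriv s x - deriv s x / s x)) :
    ∀ x, deriv w₁ x = w₂ x * w₃ x - w₁ x * (w₂ x + w₃ x)
        + (α^2 * (w₁ x - w₂ x) * (w₃ x - w₁ x) + β^2 * (w₂ x - w₃ x) * (w₁ x - w₂ x)
          + γ^2 * (w₃ x - w₁ x) * (w₂ x - w₃ x))
      ∧ deriv w₂ x = w₃ x * w₁ x - w₂ x * (w₃ x + w₁ x)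
        + (α^2 * (w₁ x - w₂ x) * (w₃ x - w₁ x) + β^2 * (w₂ x - w₃ x) * (w₁ x - w₂ x)
          + γ^2 * (w₃ x - w₁ x) * (w₂ x - w₃ x))
      ∧ deriv w₃ x = w₁ x * w₂ x - w₃ x * (w₁ x + w₂ x)
        + (α^2 * (w₁ x - w₂ x) * (w₃ x - w₁ x) + β^2 * (w₂ x - w₃ x) * (w₁ x - w₂ x)
          + γ^2 * (w₃ x - w₁ x) * (w₂ x - w₃ x)) := by
  have hssm' : ContDiff ℝ (⊤ : ℕ∞) s := hssm.of_le (by simp)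
  have hds : Differentiable ℝ s := hssm'.differentiable (by simp)
  have hd1 : Differentiable ℝ (deriv s) :=
    (hssm'.iterate_deriv 1).differentiable (by simp)
  have hd2 : Differentiable ℝ (deriv^[2] s) :=
    (hssm'.iterate_deriv 2).differentiable (by simp)
  have h2 : ∀ x, deriv^[2] s x = deriv (deriv s) x := fun x => by
    simp [Function.iterate_succ_apply', Function.iterate_one]
  intro x
  have hs'x : deriv s x ≠ 0 := ne_of_gt (hs' x)
  have Hu : HasDerivAt (fun t => deriv^[2] s t / deriv s t)
      (deriv (fun t => deriv^[2] s t / deriv s t) x) x :=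
    ((hd2 x).div (hd1 x) hs'x).hasDerivAt
  have Hp : HasDerivAt (fun t => deriv s t / s t)
      ((deriv (deriv s) x * s x - deriv s x * deriv s x) / (s x)^2) x :=
    ((hd1 x).hasDerivAt).div ((hds x).hasDerivAt) (hs0 x)
  have Hq : HasDerivAt (fun t => deriv s t / (s t - 1))
      ((deriv (deriv s) x * (s x - 1) - deriv s x * deriv s x) / (s x - 1)^2) x :=
    ((hd1 x).hasDerivAt).div (((hds x).hasDerivAt).sub_const 1) (hs1 x)
  have hA : deriv (fun t => deriv^[2] s t / deriv s t) x
      = (1/2) * (deriv (deriv s) x / deriv s x)^2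
        - (1/2) * (deriv s x)^2 * ((1 - β^2)/(s x)^2 + (1 - γ^2)/(s x - 1)^2
          + (β^2 + γ^2 - α^2 - 1)/(s x * (s x - 1))) := by
    have h := hschwarz x
    rw [h2 x] at h
    linarith
  have hw1f : w₁ = fun t => -(1/2) * (deriv^[2] s t / deriv s t - deriv s t / s t
      - deriv s t / (s t - 1)) := funext hw1
  have hw2f : w₂ = fun t => -(1/2) * (deriv^[2] s t / deriv s t - deriv s t / (s t - 1)) :=
    funext hw2
  have hw3f : w₃ = fun t => -(1/2) * (deriv^[2] s t / deriv s t - deriv s t / s t) :=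
    funext hw3
  have Hw1 : HasDerivAt w₁ (-(1/2) * (deriv (fun t => deriv^[2] s t / deriv s t) x
      - (deriv (deriv s) x * s x - deriv s x * deriv s x) / (s x)^2
      - (deriv (deriv s) x * (s x - 1) - deriv s x * deriv s x) / (s x - 1)^2)) x := by
    rw [hw1f]; exact ((Hu.sub Hp).sub Hq).const_mul _
  have Hw2 : HasDerivAt w₂ (-(1/2) * (deriv (fun t => deriv^[2] s t / deriv s t) x
      - (deriv (deriv s) x * (s x - 1) - deriv s x * deriv s x) / (s x - 1)^2)) x := by
    rw [hw2f]; exact (Hu.sub Hq).const_mul _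
  have Hw3 : HasDerivAt w₃ (-(1/2) * (deriv (fun t => deriv^[2] s t / deriv s t) x
      - (deriv (deriv s) x * s x - deriv s x * deriv s x) / (s x)^2)) x := by
    rw [hw3f]; exact (Hu.sub Hp).const_mul _
  obtain ⟨k1, k2, k3⟩ := walg α β γ (s x) (deriv s x) (deriv (deriv s) x) (hs0 x) (hs1 x) hs'x
  refine ⟨?_, ?_, ?_⟩
  · rw [Hw1.deriv, hA, hw1 x, hw2 x, hw3 x, h2 x]; exact k1
  · rw [Hw2.deriv, hA, hw1 x, hw2 x, hw3 x, h2 x]; exact k2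
  · rw [Hw3.deriv, hA, hw1 x, hw2 x, hw3 x, h2 x]; exact k3
end
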